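/- For a hypergraph H with an edge e ∈ E(H), the relaxed matching polynomial satisfies the deletion identity η_H(x) = η_{H\e}(x) - ∑_{S⊆e, |S|>1} (|S|-1) η_{(H\e)\S}(x), where H\e is the edge-deletion of e and (H\e)\S denotes successive weak deletion of all vertices in S from H\e. -/

import Mathlib

open MvPolynomial Finset
open scoped Classical

variable {n m : ℕ}

/-- A hypergraph on the vertex set `V ⊆ [n]` with edges `edge e` indexed by the
set `A ⊆ Fin m` of active edge indices.  A relaxed matching is encoded by
`s : Fin m → Finset (Fin n)`: `s e` is the subset chosen from the edge `e`
(empty meaning `e` is unused); only active edges may be used, chosen subsets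
have more than one element and are pairwise disjoint. -/
def IsRelaxedMatching (A : Finset (Fin m)) (edge : Fin m → Finset (Fin n))
    (s : Fin m → Finset (Fin n)) : Prop :=
  (∀ e, s e ⊆ edge e ∧ (s e = ∅ ∨ 1 < (s e).card)) ∧
    (∀ e ∉ A, s e = ∅) ∧
    ∀ e f, e ≠ f → Disjoint (s e) (s f)

/-- `|M|`: the number of edges used by the relaxed matching. -/
noncomputable def rmSize (s : Fin m → Finset (Fin n)) : ℕ :=
  (Finset.univ.filter fun e : Fin m => s e ≠ ∅).card

/-- `V(M) = ⋃_e S_e`. -/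
noncomputable def rmVerts (s : Fin m → Finset (Fin n)) : Finset (Fin n) :=
  Finset.univ.filter fun i => ∃ e, i ∈ s e

/-- `m_k(M)`: the number of chosen subsets of size `k`. -/
noncomputable def rmCount (s : Fin m → Finset (Fin n)) (k : ℕ) : ℕ :=
  (Finset.univ.filter fun e : Fin m => (s e).card = k).card

/-- The weight `W(M) = ∏_{k=1}^{n-1} k^{m_{k+1}(M)}`. -/
noncomputable def rmWeight (s : Fin m → Finset (Fin n)) : ℕ :=
  ∏ k ∈ Finset.Icc 1 (n - 1), k ^ rmCount s (k + 1)

/-- The multivariate relaxed matching polynomial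
`η(x) = ∑_M (-1)^{|M|} W(M) ∏_{i ∈ V \ V(M)} x_i` of the hypergraph with vertex set
`V` and active edges `A`. -/
noncomputable def relaxedMatchPoly (V : Finset (Fin n)) (A : Finset (Fin m))
    (edge : Fin m → Finset (Fin n)) : MvPolynomial (Fin n) ℂ :=
  ∑ s ∈ Finset.univ.filter (fun s => IsRelaxedMatching A edge s),
    (-1 : MvPolynomial (Fin n) ℂ) ^ rmSize s * C (rmWeight s : ℂ) *
      ∏ i ∈ V \ rmVerts s, X i

private lemma irm_erase_iff (edge : Fin m → Finset (Fin n)) (e₀ : Fin m)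
    (s : Fin m → Finset (Fin n)) :
    IsRelaxedMatching (Finset.univ.erase e₀) edge s ↔
      IsRelaxedMatching Finset.univ edge s ∧ s e₀ = ∅ := by
  unfold IsRelaxedMatching
  constructor
  · rintro ⟨h1, h2, h3⟩
    exact ⟨⟨h1, fun e he => absurd (Finset.mem_univ e) he, h3⟩, h2 e₀ (by simp)⟩
  · rintro ⟨⟨h1, -, h3⟩, h0⟩
    refine ⟨h1, fun e he => ?_, h3⟩
    have he' : e = e₀ := by simpa using he
    rwa [he']

private lemma sdiff_verts (s : Fin m → Finset (Fin n)) (e₀ : Fin m) :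
    Finset.univ \ rmVerts s =
      (Finset.univ \ s e₀) \ rmVerts (Function.update s e₀ ∅) := by
  ext i
  simp only [rmVerts, Finset.mem_sdiff, Finset.mem_filter, Finset.mem_univ, true_and,
    not_exists]
  constructor
  · intro h
    refine ⟨h e₀, fun e => ?_⟩
    rcases eq_or_ne e e₀ with rfl | hne
    · simp
    · simpa [Function.update_of_ne hne] using h e
  · rintro ⟨h0, h⟩ e
    rcases eq_or_ne e e₀ with rfl | hne
    · exact h0
    · simpa [Function.update_of_ne hne] using h e

private lemma size_update (s : Fin m → Finset (Fin n)) (e₀ : Fin m) (h0 : s e₀ ≠ ∅) :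
    rmSize s = rmSize (Function.update s e₀ ∅) + 1 := by
  unfold rmSize
  have hset : (Finset.univ.filter fun e => Function.update s e₀ ∅ e ≠ ∅)
      = (Finset.univ.filter fun e => s e ≠ ∅).erase e₀ := by
    ext e
    rcases eq_or_ne e e₀ with rfl | hne
    · simp
    · simp [Function.update_of_ne hne, hne]
  have hmem : e₀ ∈ Finset.univ.filter (fun e => s e ≠ ∅) := by simp [h0]
  have hpos := Finset.card_pos.2 ⟨e₀, hmem⟩
  rw [hset, Finset.card_erase_of_mem hmem]
  omega

private lemma count_update (s : Fin m → Finset (Fin n)) (e₀ : Fin m) (k : ℕ) (hk : k ≠ 0) :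
    rmCount s k =
      rmCount (Function.update s e₀ ∅) k + (if (s e₀).card = k then 1 else 0) := by
  unfold rmCount
  have hset : (Finset.univ.filter fun e => (Function.update s e₀ ∅ e).card = k)
      = (Finset.univ.filter fun e => (s e).card = k).erase e₀ := by
    ext e
    rcases eq_or_ne e e₀ with rfl | hne
    · simp [Ne.symm hk]
    · simp [Function.update_of_ne hne, hne]
  rw [hset]
  by_cases hc : (s e₀).card = k
  · have hmem : e₀ ∈ Finset.univ.filter (fun e => (s e).card = k) := by simp [hc]
    have hpos := Finset.card_pos.2 ⟨e₀, hmem⟩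
    rw [Finset.card_erase_of_mem hmem, if_pos hc]
    omega
  · rw [Finset.erase_eq_of_notMem (by simp [hc]), if_neg hc, Nat.add_zero]

private lemma weight_update (s : Fin m → Finset (Fin n)) (e₀ : Fin m)
    (hcard : 1 < (s e₀).card) :
    rmWeight s = rmWeight (Function.update s e₀ ∅) * ((s e₀).card - 1) := by
  unfold rmWeight
  have hle : (s e₀).card ≤ n := by
    simpa using Finset.card_le_univ (s e₀)
  have h1 : ∀ k ∈ Finset.Icc 1 (n - 1),
      k ^ rmCount s (k + 1) = k ^ rmCount (Function.update s e₀ ∅) (k + 1) *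
        (if k = (s e₀).card - 1 then k else 1) := by
    intro k hk
    rw [count_update s e₀ (k + 1) (by omega), pow_add]
    congr 1
    by_cases h : (s e₀).card = k + 1
    · rw [if_pos h, if_pos (by omega), pow_one]
    · rw [if_neg h, if_neg (by omega), pow_zero]
  rw [Finset.prod_congr rfl h1, Finset.prod_mul_distrib,
    Finset.prod_ite_eq' (Finset.Icc 1 (n - 1)) ((s e₀).card - 1) (fun k => k),
    if_pos (by rw [Finset.mem_Icc]; omega)]

private lemma fiber_sum (edge : Fin m → Finset (Fin n)) (e₀ : Fin m) (S : Finset (Fin n))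
    (hS : S ⊆ edge e₀) (hcard : 1 < S.card) :
    ∑ s ∈ Finset.univ.filter
        (fun s => IsRelaxedMatching Finset.univ edge s ∧ s e₀ = S),
      (-1 : MvPolynomial (Fin n) ℂ) ^ rmSize s * C (rmWeight s : ℂ) *
        ∏ i ∈ Finset.univ \ rmVerts s, X i
    = - (C ((S.card : ℂ) - 1) *
        relaxedMatchPoly (Finset.univ \ S) (Finset.univ.erase e₀)
          (fun e => edge e \ S)) := by
  unfold relaxedMatchPoly
  rw [Finset.mul_sum, ← Finset.sum_neg_distrib]
  refine Finset.sum_bij' (fun s _ => Function.update s e₀ ∅)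
    (fun s' _ => Function.update s' e₀ S) ?_ ?_ ?_ ?_ ?_
  · -- maps into target
    intro s hs
    rw [Finset.mem_filter] at hs ⊢
    obtain ⟨-, ⟨h1, -, h3⟩, hse⟩ := hs
    have hsub : ∀ e, Function.update s e₀ ∅ e ⊆ s e := by
      intro e
      rcases eq_or_ne e e₀ with rfl | hne
      · simp
      · rw [Function.update_of_ne hne]
    refine ⟨Finset.mem_univ _, ?_, ?_, ?_⟩
    · intro e
      rcases eq_or_ne e e₀ with rfl | hne
      · simp
      · rw [Function.update_of_ne hne]
      
        refine ⟨Finset.subset_sdiff.2 ⟨(h1 e).1, ?_⟩, (h1 e).2⟩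
        have := h3 e e₀ hne
        rwa [hse] at this
    · intro e he
      have he' : e = e₀ := by simpa using he
      rw [he']; simp
    · intro e f hef
      exact (h3 e f hef).mono (hsub e) (hsub f)
  · -- maps back
    intro s' hs'
    rw [Finset.mem_filter] at hs' ⊢
    obtain ⟨-, h1, h2, h3⟩ := hs'
    have hz : s' e₀ = ∅ := h2 e₀ (by simp)
    refine ⟨Finset.mem_univ _, ⟨?_, fun e he => absurd (Finset.mem_univ e) he, ?_⟩, ?_⟩
    · intro e
      rcases eq_or_ne e e₀ with rfl | hne
      · simp only [Function.update_self]
        exact ⟨hS, Or.inr hcard⟩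
      · rw [Function.update_of_ne hne]
        exact ⟨(h1 e).1.trans (Finset.sdiff_subset), (h1 e).2⟩
    · intro e f hef
      have key : ∀ g, g ≠ e₀ → Disjoint S (Function.update s' e₀ S g) := by
        intro g hg
        rw [Function.update_of_ne hg]
        exact (Finset.sdiff_disjoint.symm).mono_right (h1 g).1
      rcases eq_or_ne e e₀ with rfl | hne
      · rw [Function.update_self]
        exact key f (by rintro rfl; exact hef rfl)
      · rcases eq_or_ne f e₀ with rfl | hnf
        · rw [Function.update_self]
          exact (key e hne).symm
        · rw [Function.update_of_ne hne, Function.update_of_ne hnf]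
          exact h3 e f hef
    · simp
  · -- left inverse
    intro s hs
    rw [Finset.mem_filter] at hs
    rw [Function.update_idem, ← hs.2.2, Function.update_eq_self]
  · -- right inverse
    intro s' hs'
    rw [Finset.mem_filter] at hs'
    have hz : s' e₀ = ∅ := hs'.2.2.1 e₀ (by simp)
    rw [Function.update_idem, ← hz, Function.update_eq_self]
  · -- terms agree
    intro s hs
    rw [Finset.mem_filter] at hs
    obtain ⟨-, hirm, hse⟩ := hs
    have hcard' : 1 < (s e₀).card := by rw [hse]; exact hcard
    have h0 : s e₀ ≠ ∅ := by
      intro h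
      rw [h] at hcard'; simp at hcard'
    have hone : 1 ≤ S.card := by omega
    have hc : ((rmWeight (Function.update s e₀ ∅) * (S.card - 1) : ℕ) : ℂ)
        = (rmWeight (Function.update s e₀ ∅) : ℂ) * ((S.card : ℂ) - 1) := by
      push_cast [Nat.cast_sub hone]
      ring
    rw [size_update s e₀ h0, weight_update s e₀ hcard', sdiff_verts s e₀, hse, hc,
      map_mul, pow_succ]
    ring

/-- Deletion identity for the relaxed matching polynomial: for an edge `e₀` of `H`,
`η_H(x) = η_{H∖e₀}(x) - ∑_{S ⊆ e₀, |S| > 1} (|S| - 1) η_{(H∖e₀)∖S}(x)`,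
where `H∖e₀` is the edge-deletion of `e₀` and `(H∖e₀)∖S` is the weak deletion of all
vertices of `S` from `H∖e₀` (each remaining edge `f` is replaced by `f∖S`, and the
vertex set by `[n]∖S`). -/
theorem stmt_19 (edge : Fin m → Finset (Fin n)) (e₀ : Fin m) :
    relaxedMatchPoly Finset.univ Finset.univ edge =
      relaxedMatchPoly Finset.univ (Finset.univ.erase e₀) edge -
        ∑ S ∈ (edge e₀).powerset.filter (fun S => 1 < S.card),
          C ((S.card : ℂ) - 1) *
            relaxedMatchPoly (Finset.univ \ S) (Finset.univ.erase e₀)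
              (fun e => edge e \ S) := by
  conv_lhs => rw [relaxedMatchPoly]
  rw [← Finset.sum_filter_add_sum_filter_not
    (Finset.univ.filter fun s => IsRelaxedMatching Finset.univ edge s)
    (fun s => s e₀ = ∅)]
  have h1 : (Finset.univ.filter
      (fun s : Fin m → Finset (Fin n) => IsRelaxedMatching Finset.univ edge s)).filter
        (fun s => s e₀ = ∅)
      = Finset.univ.filter
        (fun s => IsRelaxedMatching (Finset.univ.erase e₀) edge s) := by
    rw [Finset.filter_filter]
    apply Finset.filter_congr
    intro s _
    simp [irm_erase_iff]
  have hmaps : ∀ s ∈ (Finset.univ.filter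
      (fun s : Fin m → Finset (Fin n) => IsRelaxedMatching Finset.univ edge s)).filter
        (fun s => ¬ s e₀ = ∅),
      s e₀ ∈ (edge e₀).powerset.filter (fun S => 1 < S.card) := by
    intro s hs
    rw [Finset.mem_filter, Finset.mem_filter] at hs
    obtain ⟨⟨-, hirm⟩, h0⟩ := hs
    rw [Finset.mem_filter, Finset.mem_powerset]
    refine ⟨(hirm.1 e₀).1, ?_⟩
    rcases (hirm.1 e₀).2 with h | h
    · exact absurd h h0
    · exact h
  rw [← Finset.sum_fiberwise_of_maps_to hmaps
    (fun s => (-1 : MvPolynomial (Fin n) ℂ) ^ rmSize s * C (rmWeight s : ℂ) *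
      ∏ i ∈ Finset.univ \ rmVerts s, X i)]
  have h2 : ∀ S ∈ (edge e₀).powerset.filter (fun S => 1 < S.card),
      (∑ s ∈ ((Finset.univ.filter
          (fun s : Fin m → Finset (Fin n) => IsRelaxedMatching Finset.univ edge s)).filter
            (fun s => ¬ s e₀ = ∅)).filter (fun s => s e₀ = S),
        (-1 : MvPolynomial (Fin n) ℂ) ^ rmSize s * C (rmWeight s : ℂ) *
          ∏ i ∈ Finset.univ \ rmVerts s, X i)
      = - (C ((S.card : ℂ) - 1) *
          relaxedMatchPoly (Finset.univ \ S) (Finset.univ.erase e₀)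
            (fun e => edge e \ S)) := by
    intro S hSmem
    rw [Finset.mem_filter, Finset.mem_powerset] at hSmem
    obtain ⟨hS, hcard⟩ := hSmem
    have hSne : S ≠ ∅ := by
      intro h
      rw [h] at hcard; simp at hcard
    have hfe : ((Finset.univ.filter
        (fun s : Fin m → Finset (Fin n) => IsRelaxedMatching Finset.univ edge s)).filter
          (fun s => ¬ s e₀ = ∅)).filter (fun s => s e₀ = S)
        = Finset.univ.filter
          (fun s => IsRelaxedMatching Finset.univ edge s ∧ s e₀ = S) := by
      rw [Finset.filter_filter, Finset.filter_filter]
      apply Finset.filter_congr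
      intro s _
      have hne : s e₀ = S → s e₀ ≠ ∅ := fun h => by rw [h]; exact hSne
      tauto
    rw [hfe]
    exact fiber_sum edge e₀ S hS hcard
  rw [Finset.sum_congr rfl h2, Finset.sum_neg_distrib, h1, ← sub_eq_add_neg,
    relaxedMatchPoly]
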